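/- arXiv:1206.5397 — 6 statements merged into one kernel-verified Lean document; each statement's English description precedes it below -/
import Mathlib

section
/- Let A be a maximal (under set inclusion) connected non-dominating set in a non-complete graph G. Then every vertex in V(G) \ N_G[A] is adjacent to every vertex in N_G(A). -/
open SimpleGraph

variable {V : Type*}

/-- Open neighbourhood of a set of vertices. -/
def setNbhd (G : SimpleGraph V) (A : Set V) : Set V :=
  {x | x ∉ A ∧ ∃ a ∈ A, G.Adj a x}

/-- Closed neighbourhood of a set of vertices. -/
def closedNbhd (G : SimpleGraph V) (A : Set V) : Set V :=
  A ∪ setNbhd G A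

/-- `A` is a connected non-dominating set: `G[A]` is connected and `N[A] ⊊ V`. -/
def ConnNonDom (G : SimpleGraph V) (A : Set V) : Prop :=
  (G.induce A).Connected ∧ closedNbhd G A ≠ Set.univ

/-- `A` is a maximal connected non-dominating set. -/
def MaxConnNonDom (G : SimpleGraph V) (A : Set V) : Prop :=
  ConnNonDom G A ∧ ∀ A' : Set V, A ⊆ A' → ConnNonDom G A' → A' = A

/-- `G` is not complete. -/
def NonComplete (G : SimpleGraph V) : Prop :=
  ∃ u v : V, u ≠ v ∧ ¬ G.Adj u v

/-- A chordless (induced) path. -/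
def IsInducedPath (G : SimpleGraph V) {x y : V} (p : G.Walk x y) : Prop :=
  p.IsPath ∧ ∀ u w : V, u ∈ p.support → w ∈ p.support → G.Adj u w → s(u, w) ∈ p.edges

/-- A chordless (induced) cycle. -/
def IsInducedCycle (G : SimpleGraph V) {v : V} (c : G.Walk v v) : Prop :=
  c.IsCycle ∧ ∀ u w : V, u ∈ c.support → w ∈ c.support → G.Adj u w → s(u, w) ∈ c.edges

/-- `G` is `k`-chordal: no induced cycle of length greater than `k`. -/
def KChordal (G : SimpleGraph V) (k : ℕ) : Prop :=
  ∀ ⦃v : V⦄ (c : G.Walk v v), IsInducedCycle G c → c.length ≤ k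

/-- `u` is an internal vertex of the path `p`. -/
def InternalVert (G : SimpleGraph V) {x y : V} (p : G.Walk x y) (u : V) : Prop :=
  u ∈ p.support ∧ u ≠ x ∧ u ≠ y

/-- Condition (C1): any two distinct neighbours of `v` are at distance at most `k-2`
in `G - v`. -/
def SimpC1 (G : SimpleGraph V) (k : ℕ) (v : V) : Prop :=
  ∀ x y : V, G.Adj v x → G.Adj v y → x ≠ y →
    ∃ (hx : x ≠ v) (hy : y ≠ v)
      (p : (G.induce {u : V | u ≠ v}).Walk ⟨x, hx⟩ ⟨y, hy⟩), p.length ≤ k - 2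

/-- Condition (C2): every induced path between non-adjacent neighbours of `v` whose
internal vertices avoid `N[v]` has at most `k-2` edges. -/
def SimpC2 (G : SimpleGraph V) (k : ℕ) (v : V) : Prop :=
  ∀ x y : V, G.Adj v x → G.Adj v y → ¬ G.Adj x y → x ≠ y →
    ∀ p : G.Walk x y, IsInducedPath G p →
      (∀ u : V, InternalVert G p u → u ≠ v ∧ ¬ G.Adj v u) →
      p.length ≤ k - 2

/-- `v` is `k`-simplicial in `G`. -/
def KSimplicial (G : SimpleGraph V) (k : ℕ) (v : V) : Prop :=
  SimpC1 G k v ∧ SimpC2 G k v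

/-- Vertices at position `≥ i` in the ordering `σ`. -/
def laterSet {V : Type*} [Fintype V] (σ : Fin (Fintype.card V) ≃ V)
    (i : Fin (Fintype.card V)) : Set V := {w | i ≤ σ.symm w}

/-- `σ` is a `k`-simplicial ordering of the vertices of `G`. -/
def KSimplicialOrdering {V : Type*} [Fintype V] (G : SimpleGraph V) (k : ℕ)
    (σ : Fin (Fintype.card V) ≃ V) : Prop :=
  ∀ i : Fin (Fintype.card V),
    KSimplicial (G.induce (laterSet σ i)) k ⟨σ i, by simp [laterSet]⟩

/-- `S` separates `a` from `b`. -/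
def IsSeparator (G : SimpleGraph V) (a b : V) (S : Set V) : Prop :=
  a ∉ S ∧ b ∉ S ∧ ∀ p : G.Walk a b, ∃ s ∈ S, s ∈ p.support

/-- `S` is a minimal `(a,b)`-vertex separator. -/
def IsMinSeparator (G : SimpleGraph V) (a b : V) (S : Set V) : Prop :=
  IsSeparator G a b S ∧ ∀ T : Set V, T ⊂ S → ¬ IsSeparator G a b T

/-- `S` is a minimal vertex separator of `G`. -/
def IsMinVertexSeparator (G : SimpleGraph V) (S : Set V) : Prop :=
  ∃ a b : V, a ≠ b ∧ ¬ G.Adj a b ∧ IsMinSeparator G a b S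

/-- `u` lies in the connected component `c` of `G - S`. -/
def InComponent (G : SimpleGraph V) (S : Set V)
    (c : (G.induce Sᶜ).ConnectedComponent) (u : V) : Prop :=
  ∃ h : u ∈ Sᶜ, (G.induce Sᶜ).connectedComponentMk ⟨u, h⟩ = c

/-- `v` is 3-simplicial: its neighbourhood is a clique. -/
def Simplicial3 (G : SimpleGraph V) (v : V) : Prop :=
  ∀ x y : V, G.Adj v x → G.Adj v y → x ≠ y → G.Adj x y

/-! Adding a vertex `w ∈ N(A)` to `A` keeps it connected, so by maximality `A ∪ {w}` is
dominating. A vertex outside `N[A]` is therefore dominated only through `w`. -/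

lemma SimpleGraph.Connected.induce_insert_of_adj {G : SimpleGraph V} {A : Set V}
    (hA : (G.induce A).Connected) {a w : V} (ha : a ∈ A) (haw : G.Adj a w) :
    (G.induce (insert w A)).Connected := by
  have hunion : ({a, w} ∪ A : Set V) = insert w A := by
    rw [Set.insert_union, Set.singleton_union, Set.insert_eq_of_mem (Set.mem_insert_of_mem w ha)]
  rw [← hunion]
  exact induce_union_connected (induce_pair_connected_of_adj haw).preconnected hA.preconnected
    ⟨a, by simp, ha⟩

lemma closedNbhd_insert_subset (G : SimpleGraph V) (A : Set V) (w : V) :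
    closedNbhd G (insert w A) ⊆ closedNbhd G A ∪ insert w (G.neighborSet w) := by
  rintro b ((rfl | hb) | ⟨hbA, a, rfl | ha, hab⟩)
  · exact Or.inr (Set.mem_insert b _)
  · exact Or.inl (Or.inl hb)
  · exact Or.inr (Or.inr hab)
  · exact Or.inl (Or.inr ⟨fun h => hbA (Or.inr h), a, ha, hab⟩)

lemma MaxConnNonDom.closedNbhd_insert_eq_univ {G : SimpleGraph V} {A : Set V}
    (hA : MaxConnNonDom G A) {w : V} (hw : w ∈ setNbhd G A) :
    closedNbhd G (insert w A) = Set.univ := by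
  obtain ⟨hwA, a, ha, haw⟩ := hw
  by_contra hdom
  have hconn := hA.1.1.induce_insert_of_adj ha haw
  exact hwA (hA.2 _ (Set.subset_insert w A) ⟨hconn, hdom⟩ ▸ Set.mem_insert w A)

theorem stmt1_general (G : SimpleGraph V) (A : Set V)
    (hA : MaxConnNonDom G A) :
    ∀ b ∉ closedNbhd G A, ∀ w ∈ setNbhd G A, G.Adj b w := by
  intro b hb w hw
  have hb' : b ∈ closedNbhd G A ∪ insert w (G.neighborSet w) :=
    closedNbhd_insert_subset G A w (hA.closedNbhd_insert_eq_univ hw ▸ Set.mem_univ b)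
  rcases hb' with hbA | rfl | hwb
  · exact absurd hbA hb
  · exact absurd (Or.inr hw) hb
  · exact hwb.symm

theorem stmt1 (G : SimpleGraph V) (hnc : NonComplete G) (A : Set V)
    (hA : MaxConnNonDom G A) :
    ∀ b ∉ closedNbhd G A, ∀ w ∈ setNbhd G A, G.Adj b w :=
  stmt1_general G A hA
end

section
/- If A is a maximal connected non-dominating set in a non-complete graph G, then the set B = V(G) \ N_G[A] is nonempty, and moreover for any x ∈ N_G(A) and b, b' ∈ B, b and b' are each adjacent to x. -/
open SimpleGraph

variable {V : Type*}

/- Adding any vertex `x` of `N(A)` to a maximal connected non-dominating set `A` keeps it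
connected, so by maximality `A ∪ {x}` dominates `G`; a vertex `b` outside `N[A]` can then only
be dominated through `x`. -/

section

variable {G : SimpleGraph V} {A : Set V} {x b : V}

lemma mem_closedNbhd_union_singleton :
    b ∈ closedNbhd G (A ∪ {x}) ↔ b ∈ closedNbhd G A ∨ b = x ∨ G.Adj x b := by
  simp only [closedNbhd, setNbhd, Set.mem_union, Set.mem_singleton_iff, Set.mem_ofPred_eq]
  grind

lemma induce_union_singleton_connected (hA : (G.induce A).Connected) (hx : x ∈ setNbhd G A) :
    (G.induce (A ∪ {x})).Connected := by
  obtain ⟨-, a, ha, hax⟩ := hx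
  exact connected_induce_union hA.preconnected Preconnected.of_subsingleton ha rfl hax

lemma MaxConnNonDom.closedNbhd_union_singleton_eq_univ
    (hA : MaxConnNonDom G A) (hx : x ∈ setNbhd G A) :
    closedNbhd G (A ∪ {x}) = Set.univ := by
  by_contra hdom
  have hxA : A ∪ {x} = A :=
    hA.2 _ Set.subset_union_left ⟨induce_union_singleton_connected hA.1.1 hx, hdom⟩
  exact hx.1 (hxA ▸ Set.mem_union_right A rfl)

lemma MaxConnNonDom.adj_of_notMem_closedNbhd
    (hA : MaxConnNonDom G A) (hx : x ∈ setNbhd G A) (hb : b ∉ closedNbhd G A) :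
    G.Adj b x := by
  have hbx : b ∈ closedNbhd G (A ∪ {x}) :=
    hA.closedNbhd_union_singleton_eq_univ hx ▸ Set.mem_univ b
  rcases mem_closedNbhd_union_singleton.mp hbx with hbA | rfl | hxb
  · exact absurd hbA hb
  · exact absurd (Set.mem_union_right A hx) hb
  · exact hxb.symm

end

theorem stmt2_general (G : SimpleGraph V) (A : Set V)
    (hA : MaxConnNonDom G A) :
    ((closedNbhd G A)ᶜ).Nonempty ∧
      ∀ x ∈ setNbhd G A, ∀ b ∈ (closedNbhd G A)ᶜ, ∀ b' ∈ (closedNbhd G A)ᶜ,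
        G.Adj b x ∧ G.Adj b' x :=
  ⟨Set.nonempty_compl.mpr hA.1.2, fun _ hx _ hb _ hb' =>
    ⟨hA.adj_of_notMem_closedNbhd hx hb, hA.adj_of_notMem_closedNbhd hx hb'⟩⟩

theorem stmt2 (G : SimpleGraph V) (hnc : NonComplete G) (A : Set V)
    (hA : MaxConnNonDom G A) :
    ((closedNbhd G A)ᶜ).Nonempty ∧
      ∀ x ∈ setNbhd G A, ∀ b ∈ (closedNbhd G A)ᶜ, ∀ b' ∈ (closedNbhd G A)ᶜ,
        G.Adj b x ∧ G.Adj b' x :=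
  stmt2_general G A hA
end

section
/- Let k ≥ 3 and let G be a non-complete k-chordal graph. If A is a maximal connected non-dominating set in G, then there exists a vertex in V(G) \ N_G[A] that is k-simplicial in G. -/
open SimpleGraph

variable {V : Type*}

/-!
In a `k`-chordal graph condition (C2) holds at every vertex `v`: an induced `x`–`y` path whose
internal vertices avoid `N[v]`, closed up through `v`, is an induced cycle, so it has at most
`k - 2` edges.

For (C1) let `B = V ∖ N[A]`. Every `s ∈ N(A)` is adjacent to all of `B`: `A ∪ {s}` is connected,
so by maximality of `A` it dominates `G`, while no vertex of `B` has a neighbour in `A`. Hence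
two non-adjacent neighbours of `b ∈ B` lie both in `N(A)` or both in `B`. In the first case a
shortest path between them through `A` is induced and closes up through `b` to an induced cycle;
in the second case (C1) in `G[B]` applies. So a `k`-simplicial vertex of `G[B]` is
`k`-simplicial in `G`, and `G[B]` has one by induction on the number of vertices, starting
from a maximal connected non-dominating set of `G[B]` (or from any vertex if `G[B]` is complete).
-/

namespace SimpleGraph.Walk

variable {W : Type*} {G : SimpleGraph V} {G' : SimpleGraph W} {x y w : V}

theorem mem_edges_of_length_eq_dist_of_adj_start {p : G.Walk x y} (hp : p.length = G.dist x y)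
    (hxw : G.Adj x w) (hw : w ∈ p.support) : s(x, w) ∈ p.edges := by
  classical
  cases p with
  | nil => exact absurd (List.mem_singleton.1 hw ▸ hxw) (G.irrefl)
  | @cons _ z _ _ rest =>
    by_contra hne
    obtain rfl | hw := List.mem_cons.1 hw
    · exact G.irrefl hxw
    have hzw : z ≠ w := by rintro rfl; exact hne (by simp)
    have htake : (rest.takeUntil w hw).length ≠ 0 := fun h0 => hzw (eq_of_length_eq_zero h0)
    have hsplit := congrArg length (rest.take_spec hw)
    have hshort := G.dist_le (cons hxw (rest.dropUntil w hw))
    simp only [length_append, length_cons] at hsplit hshort hp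
    omega

theorem isChordless_of_length_eq_dist (p : G.Walk x y) (hp : p.length = G.dist x y) :
    p.IsChordless := by
  rw [isChordless_iff_forall_mem_edges]
  induction p with
  | nil =>
    intro u w hu hw huw
    simp only [support_nil, List.mem_singleton] at hu hw
    exact absurd (hu ▸ hw ▸ huw) (G.irrefl)
  | @cons a z _ h rest ih =>
    have hrest := length_eq_dist_of_subwalk hp (isSubwalk_cons rest h)
    intro u w hu hw huw
    by_cases hua : u = a
    · subst hua; exact mem_edges_of_length_eq_dist_of_adj_start hp huw hw
    by_cases hwa : w = a
    · subst hwa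
      rw [Sym2.eq_swap]
      exact mem_edges_of_length_eq_dist_of_adj_start hp huw.symm hu
    rw [support_cons, List.mem_cons] at hu hw
    exact List.mem_cons_of_mem _ (ih hrest (hu.resolve_left hua) (hw.resolve_left hwa) huw)

theorem IsChordless.map {p : G.Walk x y} (hp : p.IsChordless) (f : G ↪g G') :
    (p.map f.toHom).IsChordless := by
  rw [isChordless_iff_forall_mem_edges] at hp ⊢
  intro u w hu hw huw
  rw [support_map, List.mem_map] at hu hw
  obtain ⟨u, hu, rfl⟩ := hu
  obtain ⟨w, hw, rfl⟩ := hw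
  rw [edges_map]
  exact List.mem_map_of_mem (hp hu hw (f.map_adj_iff.1 huw))

theorem IsPath.isCycle_cons_concat {v : V} {p : G.Walk x y} (hp : p.IsPath) (hvx : G.Adj v x)
    (hyv : G.Adj y v) (hxy : x ≠ y) (hv : v ∉ p.support) : (cons hvx (p.concat hyv)).IsCycle := by
  refine (cons_isCycle_iff _ _).2 ⟨hp.concat hv _, fun he => ?_⟩
  rw [edges_concat, List.concat_eq_append, List.mem_append, List.mem_singleton] at he
  rcases he with he | he
  · exact hv (p.fst_mem_support_of_mem_edges he)
  · rcases Sym2.eq_iff.1 he with ⟨h, _⟩ | ⟨_, h⟩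
    · exact hyv.ne h.symm
    · exact hxy h

theorem IsChordless.cons_concat {v : V} {p : G.Walk x y} (hpc : p.IsChordless)
    (hvx : G.Adj v x) (hyv : G.Adj y v) (hN : ∀ u ∈ p.support, G.Adj v u → u = x ∨ u = y) :
    (cons hvx (p.concat hyv)).IsChordless := by
  have hsupp : ∀ {a}, a ∈ (cons hvx (p.concat hyv)).support → a = v ∨ a ∈ p.support := by
    intro a ha
    simp only [support_cons, support_concat, List.mem_cons, List.mem_append] at ha
    tauto
  have hv_edge : ∀ {c}, c ∈ p.support → G.Adj v c → s(v, c) ∈ (cons hvx (p.concat hyv)).edges := by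
    intro c hc hvc
    rcases hN c hc hvc with rfl | rfl <;> simp [Sym2.eq_swap]
  rw [isChordless_iff_forall_mem_edges] at hpc ⊢
  intro a b ha hb hab
  rcases hsupp ha with rfl | hap <;> rcases hsupp hb with rfl | hbp
  · exact absurd hab (G.irrefl)
  · exact hv_edge hbp hab
  · exact Sym2.eq_swap ▸ hv_edge hap hab.symm
  · simp [hpc hap hbp hab]

end SimpleGraph.Walk

namespace SimpleGraph

variable {G : SimpleGraph V}

theorem Reachable.exists_isPath_isChordless_of_induce {s : Set V} {x y : s}
    (h : (G.induce s).Reachable x y) :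
    ∃ p : G.Walk x y, p.IsPath ∧ p.IsChordless ∧ ∀ u ∈ p.support, u ∈ s := by
  obtain ⟨q, hq, hqd⟩ := h.exists_path_of_dist
  have hsupp : ∀ u ∈ (q.map (Embedding.induce s).toHom).support, u ∈ s := by
    intro u hu
    rw [Walk.support_map, List.mem_map] at hu
    obtain ⟨u, -, rfl⟩ := hu
    exact u.2
  exact ⟨_, hq.map Subtype.val_injective, (q.isChordless_of_length_eq_dist hqd).map _, hsupp⟩

end SimpleGraph

section KChordal

variable {G : SimpleGraph V} {k : ℕ}

theorem isInducedCycle_iff {v : V} (c : G.Walk v v) :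
    IsInducedCycle G c ↔ c.IsCycle ∧ c.IsChordless := by
  rw [Walk.isChordless_iff_forall_mem_edges]; rfl

theorem isInducedPath_iff {x y : V} (p : G.Walk x y) :
    IsInducedPath G p ↔ p.IsPath ∧ p.IsChordless := by
  rw [Walk.isChordless_iff_forall_mem_edges]; rfl

theorem KChordal.induce (hch : KChordal G k) (s : Set V) : KChordal (G.induce s) k := by
  intro v c hc
  rw [isInducedCycle_iff] at hc
  have := hch (c.map (Embedding.induce s).toHom)
    ((isInducedCycle_iff _).2 ⟨hc.1.map Subtype.val_injective, hc.2.map _⟩)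
  rwa [Walk.length_map] at this

theorem KChordal.length_add_two_le (hch : KChordal G k) {v x y : V} (hvx : G.Adj v x)
    (hvy : G.Adj v y) (hxy : x ≠ y) {p : G.Walk x y} (hp : p.IsPath) (hpc : p.IsChordless)
    (hv : v ∉ p.support) (hN : ∀ u ∈ p.support, G.Adj v u → u = x ∨ u = y) :
    p.length + 2 ≤ k := by
  have := hch _ ((isInducedCycle_iff _).2
    ⟨hp.isCycle_cons_concat hvx hvy.symm hxy hv, hpc.cons_concat hvx hvy.symm hN⟩)
  simp only [Walk.length_cons, Walk.length_concat] at this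
  omega

end KChordal

section Simplicial

variable {G : SimpleGraph V} {k : ℕ}

theorem KChordal.simpC2 (hch : KChordal G k) (v : V) : SimpC2 G k v := by
  intro x y hvx hvy _ hxy p hp hint
  have hinternal : ∀ u ∈ p.support, u = x ∨ u = y ∨ (u ≠ v ∧ ¬ G.Adj v u) := by
    intro u hu
    by_cases hux : u = x
    · exact Or.inl hux
    by_cases huy : u = y
    · exact Or.inr (Or.inl huy)
    · exact Or.inr (Or.inr (hint u ⟨hu, hux, huy⟩))
  have hv : v ∉ p.support := fun hv => by
    rcases hinternal v hv with rfl | rfl | h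
    exacts [G.irrefl hvx, G.irrefl hvy, h.1 rfl]
  have hN : ∀ u ∈ p.support, G.Adj v u → u = x ∨ u = y := fun u hu hvu => by
    rcases hinternal u hu with h | h | h
    exacts [Or.inl h, Or.inr h, absurd hvu h.2]
  obtain ⟨hpath, hpc⟩ := (isInducedPath_iff p).1 hp
  have := hch.length_add_two_le hvx hvy hxy hpath hpc hv hN
  omega

theorem simpC1_iff {v : V} : SimpC1 G k v ↔ ∀ x y, G.Adj v x → G.Adj v y → x ≠ y →
    ∃ p : G.Walk x y, v ∉ p.support ∧ p.length ≤ k - 2 := by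
  refine forall₄_congr fun x y hvx hvy => forall_congr' fun _ => ⟨?_, ?_⟩
  · rintro ⟨_, _, q, hq⟩
    have hv : v ∉ (q.map (Embedding.induce _).toHom).support := by
      rw [Walk.support_map, List.mem_map]
      rintro ⟨u, -, hu⟩
      exact u.2 hu
    exact ⟨_, hv, (Walk.length_map _ q).trans_le hq⟩
  · rintro ⟨p, hv, hp⟩
    have hsupp : ∀ u ∈ p.support, u ∈ {u | u ≠ v} := fun u hu huv => hv (huv ▸ hu)
    refine ⟨hvx.ne', hvy.ne', p.induce _ hsupp, ?_⟩
    rwa [← Walk.length_map (Embedding.induce _).toHom, Walk.map_induce]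

theorem SimpleGraph.Adj.exists_short_walk_avoiding (hk : 3 ≤ k) {v x y : V} (hxy : G.Adj x y)
    (hvx : v ≠ x) (hvy : v ≠ y) : ∃ p : G.Walk x y, v ∉ p.support ∧ p.length ≤ k - 2 :=
  ⟨hxy.toWalk, by simp [hvx, hvy], by simp only [Walk.length_cons, Walk.length_nil]; omega⟩

end Simplicial

section MaxConnNonDom

variable {G : SimpleGraph V} {k : ℕ} {A : Set V}

theorem maxConnNonDom_iff_maximal : MaxConnNonDom G A ↔ Maximal (ConnNonDom G) A :=
  ⟨fun h => ⟨h.1, fun A' hA' hsub => (h.2 A' hsub hA').le⟩,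
    fun h => ⟨h.prop, fun _ hsub hA' => h.eq_of_superset hA' hsub⟩⟩

theorem exists_maxConnNonDom [Finite V] (h : ConnNonDom G A) : ∃ A', MaxConnNonDom G A' :=
  let ⟨A', _, hA'⟩ := Finite.exists_le_maximal h
  ⟨A', maxConnNonDom_iff_maximal.2 hA'⟩

theorem connNonDom_singleton {u v : V} (huv : u ≠ v) (hadj : ¬ G.Adj u v) : ConnNonDom G {u} := by
  refine ⟨(connected_iff _).2 ⟨Preconnected.of_subsingleton, ⟨⟨u, rfl⟩⟩⟩, fun h => ?_⟩
  rcases h.symm ▸ Set.mem_univ v with hv | ⟨-, a, rfl, hav⟩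
  exacts [huv (Set.mem_singleton_iff.1 hv).symm, hadj hav]

theorem not_adj_of_notMem_closedNbhd {a u : V} (ha : a ∈ A) (hu : u ∉ closedNbhd G A) :
    ¬ G.Adj a u := by
  intro hau
  by_cases huA : u ∈ A
  exacts [hu (Or.inl huA), hu (Or.inr ⟨huA, a, ha, hau⟩)]

theorem SimpleGraph.Connected.induce_insert (hA : (G.induce A).Connected) {a s : V} (ha : a ∈ A)
    (has : G.Adj a s) : (G.induce (insert s A)).Connected := by
  rw [← Set.union_singleton]
  exact connected_induce_union hA.preconnected Preconnected.of_subsingleton ha rfl has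

theorem MaxConnNonDom.adj_of_mem_setNbhd (hA : MaxConnNonDom G A) {s u : V}
    (hs : s ∈ setNbhd G A) (hu : u ∉ closedNbhd G A) : G.Adj s u := by
  obtain ⟨hsA, a, ha, has⟩ := hs
  have hdom : closedNbhd G (insert s A) = Set.univ := by
    by_contra hnd
    exact hsA ((maxConnNonDom_iff_maximal.1 hA).mem_of_prop_insert
      ⟨hA.1.1.induce_insert ha has, hnd⟩)
  rcases hdom ▸ Set.mem_univ u with (rfl | huA) | ⟨-, a', rfl | ha', ha'u⟩
  · exact absurd (Or.inr ⟨hsA, a, ha, has⟩) hu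
  · exact absurd (Or.inl huA) hu
  · exact ha'u
  · exact absurd ha'u (not_adj_of_notMem_closedNbhd ha' hu)

theorem KChordal.exists_short_walk_of_mem_setNbhd (hch : KChordal G k)
    (hA : (G.induce A).Connected) {b x y : V} (hb : b ∉ closedNbhd G A) (hbx : G.Adj b x)
    (hby : G.Adj b y) (hxy : x ≠ y) (hx : x ∈ setNbhd G A) (hy : y ∈ setNbhd G A) :
    ∃ p : G.Walk x y, b ∉ p.support ∧ p.length ≤ k - 2 := by
  obtain ⟨-, ax, hax, haxx⟩ := hx
  obtain ⟨-, ay, hay, hayy⟩ := hy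
  have hconn : (G.induce (insert x (insert y A))).Connected :=
    (hA.induce_insert hay hayy).induce_insert (Set.mem_insert_of_mem _ hax) haxx
  obtain ⟨p, hp, hpc, hps⟩ := (hconn.preconnected ⟨x, Set.mem_insert x _⟩
    ⟨y, Set.mem_insert_of_mem _ (Set.mem_insert y A)⟩).exists_isPath_isChordless_of_induce
  have hbA : ∀ u ∈ p.support, G.Adj b u → u = x ∨ u = y := by
    intro u hu hbu
    rcases hps u hu with rfl | rfl | huA
    exacts [Or.inl rfl, Or.inr rfl, absurd hbu.symm (not_adj_of_notMem_closedNbhd huA hb)]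
  have hbp : b ∉ p.support := fun hbp => by
    rcases hps b hbp with h | h | h
    exacts [hbx.ne h, hby.ne h, hb (Or.inl h)]
  have := hch.length_add_two_le hbx hby hxy hp hpc hbp hbA
  exact ⟨p, hbp, by omega⟩

end MaxConnNonDom

section KSimplicial

variable {G : SimpleGraph V} {k : ℕ}

theorem MaxConnNonDom.kSimplicial (hk : 3 ≤ k) (hch : KChordal G k) {A : Set V}
    (hA : MaxConnNonDom G A) {b : V} (hb : b ∉ closedNbhd G A)
    (hbs : KSimplicial (G.induce (closedNbhd G A)ᶜ) k ⟨b, hb⟩) : KSimplicial G k b := by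
  refine ⟨simpC1_iff.2 fun x y hbx hby hxy => ?_, hch.simpC2 b⟩
  by_cases hadj : G.Adj x y
  · exact hadj.exists_short_walk_avoiding hk hbx.ne hby.ne
  have hnbr : ∀ {z}, G.Adj b z → z ∈ setNbhd G A ∨ z ∉ closedNbhd G A := by
    intro z hbz
    rcases em (z ∈ closedNbhd G A) with (hzA | hzS) | hzB
    exacts [absurd hbz.symm (not_adj_of_notMem_closedNbhd hzA hb), Or.inl hzS, Or.inr hzB]
  rcases hnbr hbx with hxS | hxB <;> rcases hnbr hby with hyS | hyB
  · exact hch.exists_short_walk_of_mem_setNbhd hA.1.1 hb hbx hby hxy hxS hyS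
  · exact absurd (hA.adj_of_mem_setNbhd hxS hyB) hadj
  · exact absurd (hA.adj_of_mem_setNbhd hyS hxB).symm hadj
  · obtain ⟨q, hbq, hq⟩ := simpC1_iff.1 hbs.1 ⟨x, hxB⟩ ⟨y, hyB⟩ hbx hby
      (fun h => hxy (congrArg Subtype.val h))
    have hb' : b ∉ (q.map (Embedding.induce _).toHom).support := by
      rw [Walk.support_map, List.mem_map]
      rintro ⟨u, hu, rfl⟩
      exact hbq hu
    exact ⟨_, hb', (Walk.length_map _ q).trans_le hq⟩

theorem KChordal.exists_kSimplicial [Finite V] [Nonempty V] (hk : 3 ≤ k) (hch : KChordal G k) :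
    ∃ v, KSimplicial G k v := by
  induction h : Nat.card V using Nat.strong_induction_on generalizing V with
  | _ n ih =>
  by_cases hcomplete : ∀ u v : V, u ≠ v → G.Adj u v
  · obtain ⟨v⟩ := ‹Nonempty V›
    exact ⟨v, simpC1_iff.2 fun x y hvx hvy hxy =>
      (hcomplete x y hxy).exists_short_walk_avoiding hk hvx.ne hvy.ne, hch.simpC2 v⟩
  push Not at hcomplete
  obtain ⟨u, w, huw, hadj⟩ := hcomplete
  obtain ⟨A, hA⟩ := exists_maxConnNonDom (connNonDom_singleton huw hadj)
  obtain ⟨a, ha⟩ := hA.1.1.nonempty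
  have : Nonempty ↥(closedNbhd G A)ᶜ := (Set.nonempty_compl.2 hA.1.2).to_subtype
  obtain ⟨⟨b, hb⟩, hbs⟩ := ih _ (h ▸ Finite.card_subtype_lt (x := a) fun h => h (Or.inl ha))
    (G := G.induce (closedNbhd G A)ᶜ) (hch.induce _) rfl
  exact ⟨b, hA.kSimplicial hk hch hb hbs⟩

end KSimplicial

theorem stmt6_general [Fintype V] (G : SimpleGraph V) (k : ℕ) (hk : 3 ≤ k)
    (hch : KChordal G k) (A : Set V)
    (hA : MaxConnNonDom G A) :
    ∃ b ∉ closedNbhd G A, KSimplicial G k b := by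
  have : Nonempty ↥(closedNbhd G A)ᶜ := (Set.nonempty_compl.2 hA.1.2).to_subtype
  obtain ⟨⟨b, hb⟩, hbs⟩ := (hch.induce (closedNbhd G A)ᶜ).exists_kSimplicial hk
  exact ⟨b, hb, hA.kSimplicial hk hch hb hbs⟩

theorem stmt6 [Fintype V] (G : SimpleGraph V) (k : ℕ) (hk : 3 ≤ k)
    (hch : KChordal G k) (hnc : NonComplete G) (A : Set V)
    (hA : MaxConnNonDom G A) :
    ∃ b ∉ closedNbhd G A, KSimplicial G k b :=
  stmt6_general G k hk hch A hA
end

section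
/- For an integer k ≥ 3, if a graph G admits a k-simplicial ordering of its vertices, then G is k-chordal. -/
open SimpleGraph

variable {V : Type*}

/-! Let `C` be an induced cycle and `v` its vertex that comes first in the ordering. All of `C`
lies in the graph `H` induced by `v` and the vertices after it, where `v` is `k`-simplicial. If `C`
is longer than a triangle, the two neighbours `x`, `y` of `v` on `C` are non-adjacent and the rest
of `C` is an induced `x`–`y` path whose interior avoids `N_H[v]`, so by (C2) it has at most `k - 2`
edges and `C` has at most `k`. -/

section InducedCycles

variable {W : Type*} {G : SimpleGraph V} {H : SimpleGraph W}

namespace SimpleGraph.Walk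

lemma exists_eq_cons_concat {u w : V} (p : G.Walk u w) (hp : 2 ≤ p.length) :
    ∃ (y x : V) (huy : G.Adj u y) (r : G.Walk y x) (hxw : G.Adj x w),
      p = .cons huy (r.concat hxw) := by
  cases p with
  | nil => simp at hp
  | cons h q =>
    have hq : ¬ q.Nil := by rw [not_nil_iff_lt_length]; rw [length_cons] at hp; omega
    exact ⟨_, _, h, q.dropLast, q.adj_penultimate hq, by rw [concat_dropLast]⟩

lemma length_induce {s : Set V} {u v : V} (p : G.Walk u v) (hs : ∀ w ∈ p.support, w ∈ s) :
    (p.induce s hs).length = p.length := by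
  induction p with
  | nil => rfl
  | cons h q ih => simp [ih]

end SimpleGraph.Walk

lemma IsInducedCycle.of_map (f : H ↪g G) {w : W} {c : H.Walk w w}
    (hc : IsInducedCycle G (c.map f.toHom)) : IsInducedCycle H c := by
  refine ⟨(Walk.isCycle_map_iff_of_injective f.injective).mp hc.1, fun u v hu hv huv => ?_⟩
  have := hc.2 (f u) (f v) (by simp [Walk.support_map, hu]) (by simp [Walk.support_map, hv])
    (f.map_adj_iff.mpr huv)
  rw [Walk.edges_map] at this
  obtain ⟨e, he, hfe⟩ := List.mem_map.mp this
  rwa [← Sym2.map.injective f.injective (hfe.trans (Sym2.map_mk _ _ _).symm)]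

lemma IsInducedCycle.induce {s : Set V} {v : V} {c : G.Walk v v} (hc : IsInducedCycle G c)
    (hs : ∀ u ∈ c.support, u ∈ s) : IsInducedCycle (G.induce s) (c.induce s hs) :=
  IsInducedCycle.of_map (Embedding.induce s) (by rwa [Walk.map_induce])

lemma IsInducedCycle.rotate [DecidableEq V] {u v : V} {c : G.Walk u u} (hc : IsInducedCycle G c)
    (hv : v ∈ c.support) : IsInducedCycle G (c.rotate v hv) :=
  ⟨hc.1.rotate hv, fun a b ha hb hab => (c.rotate_edges v hv).perm.mem_iff.mpr
    (hc.2 a b ((c.mem_support_rotate_iff v hv).mp ha) ((c.mem_support_rotate_iff v hv).mp hb) hab)⟩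

lemma IsInducedPath.length_eq_one_of_adj {x y : V} {p : G.Walk x y} (hp : IsInducedPath G p)
    (hxy : G.Adj x y) : p.length = 1 := by
  have he := hp.2 x y p.start_mem_support p.end_mem_support hxy
  cases p with
  | nil => exact (hxy.ne rfl).elim
  | cons h q =>
    have hq := (Walk.cons_isPath_iff h q).mp hp.1
    rw [Walk.edges_cons, List.mem_cons, Sym2.eq_iff] at he
    rcases he with (⟨-, rfl⟩ | ⟨rfl, -⟩) | he
    · simp [Walk.length_eq_zero_iff.mpr (Walk.isPath_iff_nil.mp hq.1)]
    · exact (h.ne rfl).elim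
    · exact absurd (q.fst_mem_support_of_mem_edges he) hq.2

section CycleThroughVertex

variable {v x y : V} {hvy : G.Adj v y} {r : G.Walk y x} {hxv : G.Adj x v}

lemma SimpleGraph.Walk.mem_support_cons_concat {u : V} :
    u ∈ (Walk.cons hvy (r.concat hxv)).support ↔ u = v ∨ u ∈ r.support := by
  simp only [Walk.support_cons, Walk.support_concat, List.mem_cons, List.mem_append]
  tauto

lemma SimpleGraph.Walk.mem_edges_cons_concat {e : Sym2 V} :
    e ∈ (Walk.cons hvy (r.concat hxv)).edges ↔ e = s(v, y) ∨ e = s(x, v) ∨ e ∈ r.edges := by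
  simp only [Walk.edges_cons, Walk.edges_concat, List.mem_cons, List.concat_eq_append,
    List.mem_append]
  tauto

lemma IsInducedCycle.notMem_support_of_cons_concat
    (hc : IsInducedCycle G (Walk.cons hvy (r.concat hxv))) : v ∉ r.support := by
  have := hc.1.support_nodup
  simp only [Walk.support_cons, List.tail_cons, Walk.support_concat,
    List.nodup_append] at this
  exact fun hv => this.2.2 v hv v (List.mem_singleton_self v) rfl

lemma IsInducedCycle.isInducedPath_of_cons_concat
    (hc : IsInducedCycle G (Walk.cons hvy (r.concat hxv))) : IsInducedPath G r := by
  have hnodup := hc.1.support_nodup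
  simp only [Walk.support_cons, List.tail_cons, Walk.support_concat,
    List.nodup_append] at hnodup
  refine ⟨(Walk.isPath_def r).mpr hnodup.1, fun a b ha hb hab => ?_⟩
  have hv := hc.notMem_support_of_cons_concat
  rcases Walk.mem_edges_cons_concat.mp (hc.2 a b (Walk.mem_support_cons_concat.mpr (.inr ha))
    (Walk.mem_support_cons_concat.mpr (.inr hb)) hab) with he | he | he
  · rcases Sym2.mem_iff.mp (by simp [he] : v ∈ s(a, b)) with rfl | rfl <;> contradiction
  · rcases Sym2.mem_iff.mp (by simp [he] : v ∈ s(a, b)) with rfl | rfl <;> contradiction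
  · exact he

lemma IsInducedCycle.not_adj_of_cons_concat
    (hc : IsInducedCycle G (Walk.cons hvy (r.concat hxv))) {u : V} (hu : u ∈ r.support)
    (hux : u ≠ x) (huy : u ≠ y) : ¬ G.Adj v u := fun hvu => by
  rcases Walk.mem_edges_cons_concat.mp (hc.2 v u (Walk.mem_support_cons_concat.mpr (.inl rfl))
    (Walk.mem_support_cons_concat.mpr (.inr hu)) hvu) with he | he | he
  · exact huy (Sym2.congr_right.mp he)
  · exact hux (Sym2.congr_right.mp (he.trans Sym2.eq_swap))
  · exact hc.notMem_support_of_cons_concat (r.fst_mem_support_of_mem_edges he)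

end CycleThroughVertex

lemma IsInducedCycle.length_le_of_simpC2 {k : ℕ} (hk : 3 ≤ k) {v : V} (hv : SimpC2 G k v)
    {c : G.Walk v v} (hc : IsInducedCycle G c) : c.length ≤ k := by
  rcases le_or_gt c.length 3 with h3 | h4
  · omega
  obtain ⟨y, x, hvy, r, hxv, rfl⟩ := c.exists_eq_cons_concat (by omega)
  have hlen : (Walk.cons hvy (r.concat hxv)).length = r.length + 2 := by simp
  have hr := hc.isInducedPath_of_cons_concat
  have hyx : y ≠ x := by
    rintro rfl
    have := Walk.length_eq_zero_iff.mpr (Walk.isPath_iff_nil.mp hr.1)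
    omega
  have hnadj : ¬ G.Adj y x := fun h => by
    have := hr.length_eq_one_of_adj h
    omega
  have := hv y x hvy hxv.symm hnadj hyx r hr fun u ⟨hu, huy, hux⟩ =>
    ⟨fun h => hc.notMem_support_of_cons_concat (h ▸ hu), hc.not_adj_of_cons_concat hu hux huy⟩
  omega

end InducedCycles

theorem stmt10 [Fintype V] (G : SimpleGraph V) (k : ℕ) (hk : 3 ≤ k)
    (σ : Fin (Fintype.card V) ≃ V) (hσ : KSimplicialOrdering G k σ) :
    KChordal G k := by
  classical
  intro u c hc
  obtain ⟨v, hv, hmin⟩ := c.support.toFinset.exists_min_image σ.symm ⟨u, by simp⟩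
  obtain ⟨i, rfl⟩ := σ.surjective v
  have hv : σ i ∈ c.support := by simpa using hv
  have hsub : ∀ w ∈ (c.rotate _ hv).support, w ∈ laterSet σ i := fun w hw => by
    simpa [laterSet] using hmin w (by simpa using (c.mem_support_rotate_iff _ hv).mp hw)
  rw [← c.length_rotate _ hv, ← Walk.length_induce _ hsub]
  exact ((hc.rotate hv).induce hsub).length_le_of_simpC2 hk (hσ i).2
end

section
/- Let k ≥ 3. If G is k-chordal, then for every minimal vertex separator S of G, for every non-adjacent pair x, y ∈ S, and for any two distinct connected components S_i, S_j of G − S, every pair of induced x–y paths P and P' with all internal vertices in S_i and S_j respectively satisfies ||P|| + ||P'|| ≤ k. -/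
/-!
Glue the two paths into the closed walk `P ++ P'⁻¹`. Internal vertices of `P` and `P'` lie in
different components of `G - S`, so they are distinct and pairwise non-adjacent; together with
`xy ∉ E(G)` and both paths being induced, this makes the closed walk an induced cycle, of length
`‖P‖ + ‖P'‖ ≤ k`.
-/

open SimpleGraph

variable {V : Type*}

namespace SimpleGraph.Walk.IsPath

variable {G : SimpleGraph V} {u v : V}

theorem start_notMem_tail_support {p : G.Walk u v} (hp : p.IsPath) : u ∉ p.support.tail := by
  have h := hp.support_nodup
  rw [← p.cons_tail_support, List.nodup_cons] at h
  exact h.1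

theorem isCycle_append_reverse {p q : G.Walk u v} (hp : p.IsPath) (hq : q.IsPath)
    (hpq : ∀ w ∈ p.support, w ∈ q.support → w = u ∨ w = v) (huv : ¬ G.Adj u v) (hne : u ≠ v) :
    (p.append q.reverse).IsCycle := by
  have hq' : q.reverse.IsPath := (isPath_reverse_iff q).mpr hq
  refine (isCycle_def _).mpr ⟨⟨?_⟩, ?_, ?_⟩
  · rw [edges_append, edges_reverse]
    refine hp.isTrail.edges_nodup.append (List.nodup_reverse.mpr hq.isTrail.edges_nodup) ?_
    -- A common edge would have both ends in `{u, v}`, so it would be the non-edge `uv`.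
    intro e hep heq
    induction e using Sym2.ind with
    | _ a b =>
      have hab : G.Adj a b := p.edges_subset_edgeSet hep
      replace heq := List.mem_reverse.mp heq
      rcases hpq a (p.fst_mem_support_of_mem_edges hep) (q.fst_mem_support_of_mem_edges heq)
        with rfl | rfl <;>
      rcases hpq b (p.snd_mem_support_of_mem_edges hep) (q.snd_mem_support_of_mem_edges heq)
        with rfl | rfl
      exacts [hab.ne rfl, huv hab, huv hab.symm, hab.ne rfl]
  · intro h
    exact hne (by simpa using congrArg length h : p.Nil ∧ q.Nil).1.eq
  · rw [tail_support_append]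
    refine hp.support_nodup.tail.append hq'.support_nodup.tail fun w hwp hwq => ?_
    have hwq' : w ∈ q.support := by simpa using List.mem_of_mem_tail hwq
    rcases hpq w (List.mem_of_mem_tail hwp) hwq' with rfl | rfl
    · exact hp.start_notMem_tail_support hwp
    · exact hq'.start_notMem_tail_support hwq

end SimpleGraph.Walk.IsPath

namespace IsInducedPath

variable {G : SimpleGraph V} {u v : V}

theorem isInducedCycle_append_reverse {p q : G.Walk u v} (hp : IsInducedPath G p)
    (hq : IsInducedPath G q)
    (hpq : ∀ a b, InternalVert G p a → InternalVert G q b → a ≠ b ∧ ¬ G.Adj a b)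
    (huv : ¬ G.Adj u v) (hne : u ≠ v) :
    IsInducedCycle G (p.append q.reverse) := by
  have hsupport : ∀ w ∈ p.support, w ∈ q.support → w = u ∨ w = v := by
    intro w hwp hwq
    by_contra! h
    exact (hpq w w ⟨hwp, h.1, h.2⟩ ⟨hwq, h.1, h.2⟩).1 rfl
  have hcross : ∀ a ∈ p.support, ∀ b ∈ q.support, G.Adj a b →
      s(a, b) ∈ p.edges ∨ s(a, b) ∈ q.edges := by
    intro a ha b hb hab
    by_cases haq : a ∈ q.support
    · exact .inr (hq.2 a b haq hb hab)
    by_cases hbp : b ∈ p.support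
    · exact .inl (hp.2 a b ha hbp hab)
    have ha_int : InternalVert G p a :=
      ⟨ha, fun h => haq (h ▸ q.start_mem_support), fun h => haq (h ▸ q.end_mem_support)⟩
    have hb_int : InternalVert G q b :=
      ⟨hb, fun h => hbp (h ▸ p.start_mem_support), fun h => hbp (h ▸ p.end_mem_support)⟩
    exact absurd hab (hpq a b ha_int hb_int).2
  refine ⟨hp.1.isCycle_append_reverse hq.1 hsupport huv hne, fun a b ha hb hab => ?_⟩
  simp only [Walk.mem_support_append_iff, Walk.support_reverse, List.mem_reverse] at ha hb
  simp only [Walk.edges_append, Walk.edges_reverse, List.mem_append, List.mem_reverse]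
  rcases ha with ha | ha <;> rcases hb with hb | hb
  · exact .inl (hp.2 a b ha hb hab)
  · exact hcross a ha b hb hab
  · rw [Sym2.eq_swap]
    exact hcross b hb a ha hab.symm
  · exact .inr (hq.2 a b ha hb hab)

end IsInducedPath

namespace InComponent

variable {G : SimpleGraph V} {S : Set V} {c c' : (G.induce Sᶜ).ConnectedComponent} {a b : V}

theorem unique (ha : InComponent G S c a) (ha' : InComponent G S c' a) : c = c' := by
  obtain ⟨_, rfl⟩ := ha
  obtain ⟨_, rfl⟩ := ha'
  rfl

theorem eq_of_adj (ha : InComponent G S c a) (hb : InComponent G S c' b) (hab : G.Adj a b) :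
    c = c' := by
  obtain ⟨_, rfl⟩ := ha
  obtain ⟨_, rfl⟩ := hb
  exact ConnectedComponent.sound (Adj.reachable (by simpa using hab))

end InComponent

theorem stmt12_general (G : SimpleGraph V) (k : ℕ)
    (hch : KChordal G k) (S : Set V)
    (x y : V) (hxy : x ≠ y) (hnadj : ¬ G.Adj x y)
    (c c' : (G.induce Sᶜ).ConnectedComponent) (hcc : c ≠ c')
    (P P' : G.Walk x y) (hP : IsInducedPath G P) (hP' : IsInducedPath G P')
    (hPint : ∀ u : V, InternalVert G P u → InComponent G S c u)
    (hP'int : ∀ u : V, InternalVert G P' u → InComponent G S c' u) :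
    P.length + P'.length ≤ k := by
  have hcycle : IsInducedCycle G (P.append P'.reverse) := by
    refine hP.isInducedCycle_append_reverse hP' (fun a b ha hb => ⟨?_, ?_⟩) hnadj hxy
    · rintro rfl
      exact hcc ((hPint a ha).unique (hP'int a hb))
    · exact fun hab => hcc ((hPint a ha).eq_of_adj (hP'int b hb) hab)
  simpa using hch _ hcycle

theorem stmt12 [Fintype V] (G : SimpleGraph V) (k : ℕ) (hk : 3 ≤ k)
    (hch : KChordal G k) (S : Set V) (hS : IsMinVertexSeparator G S)
    (x y : V) (hxS : x ∈ S) (hyS : y ∈ S) (hxy : x ≠ y) (hnadj : ¬ G.Adj x y)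
    (c c' : (G.induce Sᶜ).ConnectedComponent) (hcc : c ≠ c')
    (P P' : G.Walk x y) (hP : IsInducedPath G P) (hP' : IsInducedPath G P')
    (hPint : ∀ u : V, InternalVert G P u → InComponent G S c u)
    (hP'int : ∀ u : V, InternalVert G P' u → InComponent G S c' u) :
    P.length + P'.length ≤ k :=
  stmt12_general G k hch S x y hxy hnadj c c' hcc P P' hP hP' hPint hP'int
end

section
/- Let k ≥ 3. If a graph G is not k-chordal (i.e., has an induced cycle of length at least k+1), then there exists a minimal vertex separator S of G, non-adjacent vertices x, z ∈ S, and induced x–z paths P and P' with internal vertices in two distinct components of G − S, such that ||P|| + ||P'|| ≥ k+1. -/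
/-!
A chordless cycle `v₀ v₁ v₂ a … b v₀` of length `> k` splits into the induced paths `v₀ v₁ v₂`
and `v₂ a … b v₀`, whose lengths add up to the length of the cycle. The inner vertices `A` of the
long arc induce a connected subgraph, and since the cycle has no chords, `v₁` has no neighbour in
`A`. Hence `N(A)` separates `a` from `v₁`; shrink it to a minimal `(a, v₁)`-separator `S`. Then
`A` and `v₁` lie in distinct components of `G - S`, and `v₀`, `v₂`, each adjacent both to `A` and
to `v₁`, must lie in `S`, as otherwise they would join these two components.
-/

open SimpleGraph

variable {V : Type*}

section Separators

variable {G : SimpleGraph V}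

theorem SimpleGraph.Walk.exists_mem_support_setNbhd {A : Set V} {u w : V} (p : G.Walk u w)
    (hu : u ∈ A) (hw : w ∉ A) : ∃ s ∈ p.support, s ∈ setNbhd G A := by
  induction p with
  | nil => exact absurd hu hw
  | @cons a b c h p ih =>
    by_cases hb : b ∈ A
    · obtain ⟨s, hs, hsA⟩ := ih hb hw
      exact ⟨s, List.mem_cons_of_mem _ hs, hsA⟩
    · exact ⟨b, by simp, hb, a, hu, h⟩

lemma isSeparator_setNbhd {A : Set V} {a b : V} (ha : a ∈ A) (hb : b ∉ closedNbhd G A) :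
    IsSeparator G a b (setNbhd G A) := by
  refine ⟨fun h => h.1 ha, fun h => hb (Or.inr h), fun p => ?_⟩
  obtain ⟨s, hs, hsA⟩ := p.exists_mem_support_setNbhd ha fun h => hb (Or.inl h)
  exact ⟨s, hsA, hs⟩

lemma IsSeparator.exists_isMinSeparator_subset [Finite V] {a b : V} {S₀ : Set V}
    (h : IsSeparator G a b S₀) : ∃ S ⊆ S₀, IsMinSeparator G a b S := by
  obtain ⟨S, hSS₀, hS⟩ := exists_minimal_le_of_wellFoundedLT (IsSeparator G a b) S₀ h
  exact ⟨S, hSS₀, hS.prop, fun T hT hTsep => hT.ne (hS.eq_of_le hTsep hT.le)⟩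

lemma IsSeparator.connectedComponentMk_ne {a b : V} {S : Set V} (h : IsSeparator G a b S) :
    (G.induce Sᶜ).connectedComponentMk ⟨a, h.1⟩ ≠ (G.induce Sᶜ).connectedComponentMk ⟨b, h.2.1⟩ := by
  rw [Ne, ConnectedComponent.eq]
  rintro ⟨p⟩
  obtain ⟨s, hsS, hs⟩ := h.2.2 (p.map (Embedding.induce Sᶜ).toHom)
  obtain ⟨w, -, rfl⟩ := List.mem_map.mp (Walk.support_map _ p ▸ hs)
  exact w.2 hsS

lemma inComponent_of_connected_induce {S A : Set V} (hA : (G.induce A).Connected) (hAS : A ⊆ Sᶜ)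
    {a : V} (ha : a ∈ A) :
    ∀ u ∈ A, InComponent G S ((G.induce Sᶜ).connectedComponentMk ⟨a, hAS ha⟩) u := fun u hu =>
  ⟨hAS hu, ConnectedComponent.eq.mpr
    ((hA.preconnected ⟨u, hu⟩ ⟨a, ha⟩).map (G.induceHomOfLE hAS).toHom)⟩

theorem exists_isMinVertexSeparator_of_mem_setNbhd [Finite V] {A B : Set V}
    (hA : (G.induce A).Connected) (hB : (G.induce B).Connected)
    (hAB : Disjoint (closedNbhd G A) B) {x z : V}
    (hx : x ∈ setNbhd G A ∩ setNbhd G B) (hz : z ∈ setNbhd G A ∩ setNbhd G B) :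
    ∃ S : Set V, IsMinVertexSeparator G S ∧ x ∈ S ∧ z ∈ S ∧
      ∃ c c' : (G.induce Sᶜ).ConnectedComponent, c ≠ c' ∧
        (∀ u ∈ A, InComponent G S c u) ∧ (∀ u ∈ B, InComponent G S c' u) := by
  obtain ⟨⟨a, ha⟩⟩ := hA.nonempty
  obtain ⟨⟨b, hb⟩⟩ := hB.nonempty
  have hnA : ∀ {u}, u ∈ B → u ∉ closedNbhd G A := fun hu h => Set.disjoint_right.mp hAB hu h
  obtain ⟨S, hSA, hS⟩ := (isSeparator_setNbhd ha (hnA hb)).exists_isMinSeparator_subset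
  have hAS : A ⊆ Sᶜ := fun u hu hus => (hSA hus).1 hu
  have hBS : B ⊆ Sᶜ := fun u hu hus => hnA hu (Or.inr (hSA hus))
  have hcA := inComponent_of_connected_induce hA hAS ha
  have hcB := inComponent_of_connected_induce hB hBS hb
  have hne := hS.1.connectedComponentMk_ne
  have hmem : ∀ y ∈ setNbhd G A ∩ setNbhd G B, y ∈ S := by
    rintro y ⟨⟨-, a', ha', hay⟩, -, b', hb', hby⟩
    by_contra hyS
    obtain ⟨_, hca⟩ := hcA a' ha'
    obtain ⟨_, hcb⟩ := hcB b' hb'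
    apply hne
    rw [← hca, ← hcb]
    exact (ConnectedComponent.connectedComponentMk_eq_of_adj
      (show (G.induce Sᶜ).Adj ⟨a', hAS ha'⟩ ⟨y, hyS⟩ from hay)).trans
      (ConnectedComponent.connectedComponentMk_eq_of_adj
      (show (G.induce Sᶜ).Adj ⟨y, hyS⟩ ⟨b', hBS hb'⟩ from hby.symm))
  refine ⟨S, ⟨a, b, ?_, ?_, hS⟩, hmem x hx, hmem z hz, _, _, hne, hcA, hcB⟩
  · rintro rfl
    exact hnA hb (Or.inl ha)
  · intro hab
    exact hnA hb (Or.inr ⟨fun hbA => hnA hb (Or.inl hbA), a, ha, hab⟩)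

end Separators

lemma SimpleGraph.Walk.exists_eq_cons_cons_cons_concat {G : SimpleGraph V} {u : V}
    (c : G.Walk u u) (hc : 4 ≤ c.length) :
    ∃ (v w x y : V) (h₁ : G.Adj u v) (h₂ : G.Adj v w) (h₃ : G.Adj w x) (h₄ : G.Adj y u)
      (r : G.Walk x y), c = .cons h₁ (.cons h₂ (.cons h₃ (r.concat h₄))) := by
  rcases c with _ | ⟨h₁, _ | ⟨h₂, _ | ⟨h₃, _ | ⟨h, p⟩⟩⟩⟩ <;> try simp at hc
  obtain ⟨y, r, h₄, hr⟩ := p.exists_cons_eq_concat h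
  exact ⟨_, _, _, y, h₁, h₂, h₃, h₄, r, by rw [hr]⟩

section InducedCycles

variable {G : SimpleGraph V}

lemma isInducedPath_cons_cons_nil {u v w : V} (h : G.Adj u v) (h' : G.Adj v w) (huw : u ≠ w)
    (hnadj : ¬ G.Adj u w) : IsInducedPath G (.cons h (.cons h' .nil)) := by
  refine ⟨.mk' (by simp [h.ne, h'.ne, huw]), fun x y hx hy hxy => ?_⟩
  simp only [Walk.support_cons, Walk.support_nil, List.mem_cons, List.not_mem_nil, or_false]
    at hx hy
  rcases hx with rfl | rfl | rfl <;> rcases hy with rfl | rfl | rfl <;>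
    simp_all [G.adj_comm, Sym2.eq_swap]

lemma IsInducedPath.reverse {u v : V} {p : G.Walk u v} (hp : IsInducedPath G p) :
    IsInducedPath G p.reverse :=
  ⟨hp.1.reverse, fun x y hx hy hxy => by
    simpa using hp.2 x y (by simpa using hx) (by simpa using hy) hxy⟩

variable {u v w : V} {h : G.Adj u v} {h' : G.Adj v w} {q : G.Walk w u}

lemma IsInducedCycle.nodup_cons_support (hc : IsInducedCycle G (.cons h (.cons h' q))) :
    (v :: q.support).Nodup := by
  simpa using hc.1.support_nodup

lemma IsInducedCycle.isInducedPath_of_cons_cons (hc : IsInducedCycle G (.cons h (.cons h' q))) :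
    IsInducedPath G q := by
  obtain ⟨hvq, hq⟩ := List.nodup_cons.mp hc.nodup_cons_support
  refine ⟨.mk' hq, fun x y hx hy hxy => ?_⟩
  have hchord := hc.2 x y (by simp [hx]) (by simp [hy]) hxy
  simp only [Walk.edges_cons, List.mem_cons] at hchord
  rcases hchord with he | he | he
  · rcases Sym2.mem_iff.mp (he ▸ Sym2.mem_mk_right u v) with rfl | rfl <;> contradiction
  · rcases Sym2.mem_iff.mp (he ▸ Sym2.mem_mk_left v w) with rfl | rfl <;> contradiction
  · exact he

lemma IsInducedCycle.ne_of_cons_cons (hc : IsInducedCycle G (.cons h (.cons h' q))) : u ≠ w := by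
  rintro rfl
  have hq := (Walk.isPath_iff_nil.mp hc.isInducedPath_of_cons_cons.1).length_eq_zero
  have hlen := hc.1.three_le_length
  simp only [Walk.length_cons] at hlen
  omega

lemma IsInducedCycle.eq_or_eq_of_adj (hc : IsInducedCycle G (.cons h (.cons h' q))) {x : V}
    (hx : x ∈ q.support) (hvx : G.Adj v x) : x = u ∨ x = w := by
  have hchord := hc.2 v x (by simp) (by simp [hx]) hvx
  simp only [Walk.edges_cons, List.mem_cons] at hchord
  rcases hchord with he | he | he
  · rcases Sym2.eq_iff.mp he with ⟨hvu, -⟩ | ⟨-, rfl⟩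
    exacts [absurd hvu.symm h.ne, .inl rfl]
  · rcases Sym2.eq_iff.mp he with ⟨-, rfl⟩ | ⟨hvw, -⟩
    exacts [.inr rfl, absurd hvw h'.ne]
  · exact absurd (q.fst_mem_support_of_mem_edges he) (List.nodup_cons.mp hc.nodup_cons_support).1

lemma IsInducedCycle.not_adj_of_cons_cons (hc : IsInducedCycle G (.cons h (.cons h' q)))
    (hq : 2 ≤ q.length) : ¬ G.Adj u w := by
  intro huw
  have hchord := hc.2 u w (by simp) (by simp) huw
  simp only [Walk.edges_cons, List.mem_cons] at hchord
  rcases hchord with he | he | he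
  · rcases Sym2.eq_iff.mp he with ⟨-, hwv⟩ | ⟨huv, -⟩
    exacts [h'.ne hwv.symm, h.ne huv]
  · rcases Sym2.eq_iff.mp he with ⟨huv, -⟩ | ⟨-, hwv⟩
    exacts [h.ne huv, h'.ne hwv.symm]
  · have := (hc.isInducedPath_of_cons_cons.1).length_eq_one_of_mem_edges (Sym2.eq_swap ▸ he)
    omega

lemma IsInducedCycle.exists_isMinVertexSeparator [Finite V] {a b : V} {h₂ : G.Adj w a}
    {h₃ : G.Adj b u} {r : G.Walk a b}
    (hc : IsInducedCycle G (.cons h (.cons h' (.cons h₂ (r.concat h₃))))) :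
    ∃ S : Set V, IsMinVertexSeparator G S ∧ u ∈ S ∧ w ∈ S ∧
      ∃ c c' : (G.induce Sᶜ).ConnectedComponent, c ≠ c' ∧
        InComponent G S c v ∧ ∀ x ∈ r.support, InComponent G S c' x := by
  have hnd := hc.nodup_cons_support
  simp only [Walk.support_cons, Walk.support_concat, List.nodup_cons, List.mem_cons,
    List.mem_append, List.nodup_append, List.not_mem_nil, or_false, not_or, forall_eq,
    ne_eq] at hnd
  obtain ⟨⟨hvw, hvr, hvu⟩, ⟨hwr, -⟩, -, -, hur⟩ := hnd
  have hdisj : Disjoint (closedNbhd G {x | x ∈ r.support}) {v} := by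
    refine Set.disjoint_singleton_right.mpr ?_
    rintro (hv | ⟨-, x, hx : x ∈ r.support, hxv⟩)
    · exact hvr hv
    · rcases hc.eq_or_eq_of_adj (by simp [hx]) hxv.symm with rfl | rfl
      exacts [hur x hx rfl, hwr hx]
  obtain ⟨S, hS, huS, hwS, c', c, hne, hr, hv⟩ := exists_isMinVertexSeparator_of_mem_setNbhd
    r.connected_induce_support Connected.of_subsingleton hdisj
    ⟨⟨fun hu => hur u hu rfl, b, r.end_mem_support, h₃⟩, Ne.symm hvu, v, rfl, h.symm⟩
    ⟨⟨hwr, a, r.start_mem_support, h₂.symm⟩, Ne.symm hvw, v, rfl, h'⟩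
  exact ⟨S, hS, huS, hwS, c, c', hne.symm, hv v rfl, hr⟩

end InducedCycles

theorem stmt13 [Fintype V] (G : SimpleGraph V) (k : ℕ) (hk : 3 ≤ k)
    (h : ¬ KChordal G k) :
    ∃ S : Set V, IsMinVertexSeparator G S ∧
      ∃ x z : V, x ∈ S ∧ z ∈ S ∧ x ≠ z ∧ ¬ G.Adj x z ∧
        ∃ (c c' : (G.induce Sᶜ).ConnectedComponent), c ≠ c' ∧
          ∃ (P P' : G.Walk x z), IsInducedPath G P ∧ IsInducedPath G P' ∧
            (∀ u : V, InternalVert G P u → InComponent G S c u) ∧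
            (∀ u : V, InternalVert G P' u → InComponent G S c' u) ∧
            k + 1 ≤ P.length + P'.length := by
  obtain ⟨v₀, c, hc, hlen⟩ : ∃ (v₀ : V) (c : G.Walk v₀ v₀), IsInducedCycle G c ∧ k < c.length := by
    simpa [KChordal] using h
  obtain ⟨v₁, v₂, a, b, h₀₁, h₁₂, h₂a, hb₀, r, rfl⟩ :=
    c.exists_eq_cons_cons_cons_concat (by omega)
  set q := Walk.cons h₂a (r.concat hb₀)
  have h₀₂ : ¬ G.Adj v₀ v₂ := hc.not_adj_of_cons_cons (by simp [q])
  obtain ⟨S, hS, h₀S, h₂S, c₁, c, hne, h₁, hr⟩ := hc.exists_isMinVertexSeparator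
  refine ⟨S, hS, v₀, v₂, h₀S, h₂S, hc.ne_of_cons_cons, h₀₂, c₁, c, hne,
    .cons h₀₁ (.cons h₁₂ .nil), q.reverse,
    isInducedPath_cons_cons_nil _ _ hc.ne_of_cons_cons h₀₂,
    hc.isInducedPath_of_cons_cons.reverse, ?_, ?_, ?_⟩
  · rintro u ⟨hu, hu₀, hu₂⟩
    obtain rfl : u = v₁ := by simpa [hu₀, hu₂] using hu
    exact h₁
  · rintro u ⟨hu, hu₀, hu₂⟩
    simp only [q, Walk.support_reverse, List.mem_reverse, Walk.support_cons, Walk.support_concat,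
      List.mem_cons, List.mem_append, List.not_mem_nil, or_false] at hu
    exact hr u (by tauto)
  · simp [q] at hlen ⊢
    omega
end
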